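/- Suppose K = F₂ and S is a basis of X. Then, for any α ∈ X*, the affine transvection group Tr^α(S) preserves the function Q_S + α, i.e., (Q_S + α)(g(x)) = (Q_S + α)(x) for every g ∈ Tr^α(S) and every x ∈ X. -/

import Mathlib

/-- Affine transvections `T^{α(s)}_{s,k} : x ↦ x + k(ω(x,s) + α(s))·s`. -/
def affTransvectionSet {K X : Type*} [Field K] [AddCommGroup X] [Module K X]
    (ω : X →ₗ[K] X →ₗ[K] K) (S : Set X) (α : X → K) : Set (Equiv.Perm X) :=
  {f | ∃ s ∈ S, ∃ k : K, k ≠ 0 ∧ ∀ x, f x = x + (k * (ω x s + α s)) • s}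

/-- The affine transvection group `Tr^α(S)`. -/
def affTransvectionGroup {K X : Type*} [Field K] [AddCommGroup X] [Module K X]
    (ω : X →ₗ[K] X →ₗ[K] K) (S : Set X) (α : X → K) : Subgroup (Equiv.Perm X) :=
  Subgroup.closure (affTransvectionSet ω S α)

/-!
Over `𝔽₂` the only affine transvection along `s` is `x ↦ x + c • s` with `c = ω(x,s) + α(s)`.
Polarization and `Q s = 1` give `(Q + α)(x + c • s) = (Q + α)(x) + c (1 + ω(x,s) + α(s))
= (Q + α)(x) + c (1 + c)`, and `c (1 + c) = 0` in `𝔽₂`. The permutations preserving a function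
form a subgroup, so the group generated by these transvections preserves `Q + α` too.
-/

def Equiv.Perm.invariantSubgroup {X Y : Type*} (f : X → Y) : Subgroup (Equiv.Perm X) where
  carrier := {g | ∀ x, f (g x) = f x}
  one_mem' _ := rfl
  mul_mem' {g h} hg hh x := (hg (h x)).trans (hh x)
  inv_mem' {g} hg x := by simpa using (hg (g⁻¹ x)).symm

section Transvection

variable {X : Type*} [AddCommGroup X] [Module (ZMod 2) X]
  (ω : X →ₗ[ZMod 2] X →ₗ[ZMod 2] ZMod 2) (Q : X → ZMod 2) (α : Module.Dual (ZMod 2) X)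

theorem quadratic_add_dual_add_transvection (hQpol : ∀ x y, Q (x + y) + Q x + Q y = ω x y)
    {s : X} (hs : Q s = 1) (x : X) :
    Q (x + (ω x s + α s) • s) + α (x + (ω x s + α s) • s) = Q x + α x := by
  rcases (by decide : ∀ c : ZMod 2, c = 0 ∨ c = 1) (ω x s + α s) with hc | hc
  · rw [hc, zero_smul, add_zero]
  · have h2 : (2 : ZMod 2) = 0 := rfl
    rw [hc, one_smul, map_add]
    linear_combination hQpol x s + hs + hc + (1 - Q x - Q s) * h2

theorem affTransvectionGroup_le_invariantSubgroup
    (hQpol : ∀ x y, Q (x + y) + Q x + Q y = ω x y) (S : Set X) (hQS : ∀ s ∈ S, Q s = 1) :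
    affTransvectionGroup ω S α ≤ Equiv.Perm.invariantSubgroup (Q + ⇑α) := by
  refine Subgroup.closure_le _ |>.mpr ?_
  rintro f ⟨s, hs, k, hk, hf⟩ x
  obtain rfl : k = 1 := by clear hf; revert k; decide
  simp only [Pi.add_apply, hf, one_mul]
  exact quadratic_add_dual_add_transvection ω Q α hQpol (hQS s hs) x

end Transvection

theorem stmt10_general {X : Type*} [AddCommGroup X] [Module (ZMod 2) X]
    (ω : X →ₗ[ZMod 2] X →ₗ[ZMod 2] ZMod 2)
    (S : Set X)
    (Q : X → ZMod 2) (hQS : ∀ s ∈ S, Q s = 1)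
    (hQpol : ∀ x y, Q (x + y) + Q x + Q y = ω x y)
    (α : Module.Dual (ZMod 2) X) :
    ∀ g ∈ affTransvectionGroup ω S ⇑α, ∀ x, Q (g x) + α (g x) = Q x + α x :=
  fun _ hg => affTransvectionGroup_le_invariantSubgroup ω Q α hQpol S hQS hg

/-- for `K = 𝔽₂` and a basis `S` of `X`, the affine transvection
group `Tr^α(S)` preserves the function `Q_S + α`. -/
theorem stmt10 {X : Type*} [AddCommGroup X] [Module (ZMod 2) X]
    [FiniteDimensional (ZMod 2) X]
    (ω : X →ₗ[ZMod 2] X →ₗ[ZMod 2] ZMod 2) (halt : ∀ x, ω x x = 0)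
    (S : Set X) (hind : LinearIndependent (ZMod 2) ((↑) : S → X))
    (hspan : Submodule.span (ZMod 2) S = ⊤)
    (Q : X → ZMod 2) (hQS : ∀ s ∈ S, Q s = 1)
    (hQpol : ∀ x y, Q (x + y) + Q x + Q y = ω x y)
    (α : Module.Dual (ZMod 2) X) :
    ∀ g ∈ affTransvectionGroup ω S ⇑α, ∀ x, Q (g x) + α (g x) = Q x + α x :=
  stmt10_general ω S Q hQS hQpol α
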